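/- arXiv:1501.07440 — 2 statements merged into one kernel-verified Lean document; each statement's English description precedes it below -/
import Mathlib

section
/- Fix reals ν > 0 and ρ ∈ (0, 1/2). Let (k_j) and (ℓ_j) be sequences of positive integers with k_j → ∞, 1 ≤ ℓ_j ≤ k_j for all j, and ℓ_j / k_j → 0. Then, writing ξ_j := (1 − ν/k_j)^{ℓ_j}, the ratio [ (1 − ν/k_j)^{k_j − ℓ_j} · ( H₂(ξ_j ⋆ ρ) − H₂(ρ) ) ] / [ e^{−ν} · ν · (ℓ_j/k_j) · (1 − 2ρ) · log((1−ρ)/ρ) ] converges to 1 as j → ∞. -/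
/-!
Write `a = ν / k` and `ξ = (1 - a) ^ ℓ`. Bernoulli's inequality and `(1 - a) ^ ℓ ≤ e^{-ℓa}` squeeze
`1 - ξ` between `ℓa / (1 + ℓa)` and `ℓa`, so `1 - ξ ~ νℓ/k → 0`; consequently
`(1 - a) ^ (k - ℓ) = (1 - a) ^ k / ξ → e^{-ν}`. Since `ξ ⋆ ρ = ρ + (1 - ξ)(1 - 2ρ)` with
`(1 - ξ)(1 - 2ρ) → 0⁺`, the entropy increment is `H₂'(ρ) (1 - ξ)(1 - 2ρ)` to first order, and
`H₂'(ρ) = log ((1 - ρ) / ρ)`. Multiplying the three first-order equivalents gives the denominator.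
-/

/-- Binary entropy function with natural logarithm. -/
noncomputable def binH (q : ℝ) : ℝ := -q * Real.log q - (1 - q) * Real.log (1 - q)

/-- The binary "star" operation `q ⋆ ρ = qρ + (1-q)(1-ρ)`. -/
def star' (q ρ : ℝ) : ℝ := q * ρ + (1 - q) * (1 - ρ)

open Filter Real Topology Asymptotics

lemma binH_eq_binEntropy : binH = binEntropy := by
  funext q
  simp only [binH, binEntropy, log_inv]
  ring

lemma star'_eq_add (q ρ : ℝ) : star' q ρ = ρ + (1 - q) * (1 - 2 * ρ) := by
  unfold star'
  ring

lemma tendsto_binH_slope {ι : Type*} {F : Filter ι} {ρ : ℝ} (hρ₀ : 0 < ρ) (hρ₁ : ρ < 1)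
    {t : ι → ℝ} (ht : Tendsto t F (𝓝 0)) (ht_pos : ∀ᶠ i in F, 0 < t i) :
    Tendsto (fun i => (binH (ρ + t i) - binH ρ) / t i) F (𝓝 (log ((1 - ρ) / ρ))) := by
  have hderiv : HasDerivAt binH (log ((1 - ρ) / ρ)) ρ := by
    rw [binH_eq_binEntropy, log_div (by linarith) hρ₀.ne']
    exact hasDerivAt_binEntropy hρ₀.ne' hρ₁.ne
  have ht' : Tendsto t F (𝓝[>] 0) := tendsto_nhdsWithin_iff.2 ⟨ht, ht_pos⟩
  refine (hderiv.tendsto_slope_zero_right.comp ht').congr fun i => ?_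
  simp only [Function.comp_apply, smul_eq_mul, div_eq_inv_mul]

lemma one_sub_pow_mul_one_add_mul_le_one {a : ℝ} (ha₀ : 0 ≤ a) (ha₁ : a ≤ 1) (n : ℕ) :
    (1 - a) ^ n * (1 + n * a) ≤ 1 :=
  calc (1 - a) ^ n * (1 + n * a)
      ≤ exp (-a) ^ n * exp (n * a) := by
        gcongr
        · exact one_sub_le_exp_neg a
        · linarith [add_one_le_exp (n * a)]
    _ = 1 := by rw [← exp_nat_mul, ← exp_add]; simp

section Sequences

variable {ι : Type*} {F : Filter ι}

lemma tendsto_one_sub_one_sub_pow_div {a : ι → ℝ} {n : ι → ℕ}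
    (ha : ∀ᶠ i in F, 0 ≤ a i ∧ a i ≤ 1) (hpos : ∀ᶠ i in F, 0 < n i * a i)
    (hlim : Tendsto (fun i => n i * a i) F (𝓝 0)) :
    Tendsto (fun i => (1 - (1 - a i) ^ n i) / (n i * a i)) F (𝓝 1) := by
  have hlower : Tendsto (fun i => (1 + n i * a i)⁻¹) F (𝓝 1) := by
    simpa using ((tendsto_const_nhds (x := (1 : ℝ))).add hlim).inv₀ (by norm_num)
  refine tendsto_of_tendsto_of_tendsto_of_le_of_le' hlower tendsto_const_nhds ?_ ?_
  · filter_upwards [ha, hpos] with i ⟨ha₀, ha₁⟩ hx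
    have := one_sub_pow_mul_one_add_mul_le_one ha₀ ha₁ (n i)
    rw [le_div_iff₀ hx, inv_mul_eq_div, div_le_iff₀ (by linarith)]
    nlinarith
  · filter_upwards [ha, hpos] with i ⟨ha₀, ha₁⟩ hx
    have := one_add_mul_le_pow (a := -a i) (by linarith) (n i)
    rw [← sub_eq_add_neg, mul_neg, ← sub_eq_add_neg] at this
    rw [div_le_one hx]
    linarith

variable {ν : ℝ} {k l : ι → ℕ}

lemma eventually_div_natCast_mem_Ioo (hν : 0 < ν) (hk : Tendsto k F atTop) :
    ∀ᶠ i in F, ν / k i ∈ Set.Ioo 0 1 := by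
  filter_upwards [(tendsto_natCast_atTop_atTop.comp hk).eventually_gt_atTop ν] with i hi
  have hk : 0 < (k i : ℝ) := hν.trans hi
  exact ⟨div_pos hν hk, (div_lt_one hk).2 hi⟩

lemma tendsto_one_sub_one_sub_div_pow_div (hν : 0 < ν) (hl : ∀ i, 1 ≤ l i)
    (hk : Tendsto k F atTop) (hlk : Tendsto (fun i => (l i : ℝ) / k i) F (𝓝 0)) :
    Tendsto (fun i => (1 - (1 - ν / k i) ^ l i) / (ν * (l i / k i))) F (𝓝 1) := by
  have hmul : ∀ i, (l i : ℝ) * (ν / k i) = ν * (l i / k i) := fun i => mul_div_left_comm _ _ _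
  have ha := eventually_div_natCast_mem_Ioo hν hk
  refine (tendsto_one_sub_one_sub_pow_div (n := l) (ha.mono fun i h => ⟨h.1.le, h.2.le⟩)
    ?_ ?_).congr fun i => by rw [hmul]
  · filter_upwards [ha] with i hi
    exact mul_pos (by exact_mod_cast hl i) hi.1
  · simpa only [hmul, mul_zero] using hlk.const_mul ν

lemma tendsto_one_sub_div_pow_sub (hν : 0 < ν) (hk : Tendsto k F atTop) (hlk : ∀ i, l i ≤ k i)
    (hl : Tendsto (fun i => (1 - ν / k i) ^ l i) F (𝓝 1)) :
    Tendsto (fun i => (1 - ν / k i) ^ (k i - l i)) F (𝓝 (exp (-ν))) := by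
  have hpow : Tendsto (fun i => (1 - ν / k i) ^ k i) F (𝓝 (exp (-ν))) := by
    simpa [Function.comp_def, neg_div, ← sub_eq_add_neg] using
      (tendsto_one_add_div_pow_exp (-ν)).comp hk
  refine (div_one (exp (-ν)) ▸ hpow.div hl one_ne_zero).congr' ?_
  filter_upwards [eventually_div_natCast_mem_Ioo hν hk] with i hi
  exact (pow_sub₀ _ (sub_ne_zero.2 hi.2.ne') (hlk i)).symm

end Sequences

theorem gtn_mutual_information_small_ratio_general (ν ρ : ℝ) (hν : 0 < ν) (hρ0 : 0 < ρ)
    (hρ1 : ρ < 1 / 2)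
    (k l : ℕ → ℕ) (hl1 : ∀ j, 1 ≤ l j) (hlk : ∀ j, l j ≤ k j)
    (hktop : Filter.Tendsto k Filter.atTop Filter.atTop)
    (hratio : Filter.Tendsto (fun j => (l j : ℝ) / (k j : ℝ)) Filter.atTop (nhds 0)) :
    Filter.Tendsto
      (fun j => ((1 - ν / (k j : ℝ)) ^ (k j - l j) *
          (binH (star' ((1 - ν / (k j : ℝ)) ^ (l j)) ρ) - binH ρ))
        / (Real.exp (-ν) * ν * ((l j : ℝ) / (k j : ℝ)) * (1 - 2 * ρ) *
            Real.log ((1 - ρ) / ρ)))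
      Filter.atTop (nhds 1) := by
  have hgap_ratio := tendsto_one_sub_one_sub_div_pow_div hν hl1 hktop hratio
  have hgap : Tendsto (fun j => 1 - (1 - ν / k j) ^ l j) atTop (𝓝 0) :=
    (isEquivalent_of_tendsto_one hgap_ratio).symm.tendsto_nhds (by simpa using hratio.const_mul ν)
  have hdecay := tendsto_one_sub_div_pow_sub hν hktop hlk (by simpa using hgap.const_sub 1)
  have hgap_pos : ∀ᶠ j in atTop, 0 < 1 - (1 - ν / k j) ^ l j := by
    filter_upwards [eventually_div_natCast_mem_Ioo hν hktop] with j ⟨ha₀, ha₁⟩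
    exact sub_pos.2 (pow_lt_one₀ (by linarith) (by linarith) (by have := hl1 j; omega))
  have hρ : 0 < 1 - 2 * ρ := by linarith
  have hslope := tendsto_binH_slope hρ0 (by linarith) (by simpa using hgap.mul_const (1 - 2 * ρ))
    (hgap_pos.mono fun j hj => mul_pos hj hρ)
  have hL : log ((1 - ρ) / ρ) ≠ 0 := (log_pos ((one_lt_div hρ0).2 (by linarith))).ne'
  have h := ((hdecay.mul hslope).mul hgap_ratio).div_const (exp (-ν) * log ((1 - ρ) / ρ))
  rw [mul_one, div_self (mul_ne_zero (exp_ne_zero _) hL)] at h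
  refine h.congr' ?_
  filter_upwards [hgap_pos, hktop.eventually_gt_atTop 0] with j hξ hk
  have hk' : (k j : ℝ) ≠ 0 := by positivity
  have hl' : (l j : ℝ) ≠ 0 := by have := hl1 j; positivity
  rw [star'_eq_add]
  generalize (1 - ν / k j) ^ l j = ξ at hξ ⊢
  field_simp

theorem gtn_mutual_information_small_ratio (ν ρ : ℝ) (hν : 0 < ν) (hρ0 : 0 < ρ)
    (hρ1 : ρ < 1 / 2)
    (k l : ℕ → ℕ) (hk1 : ∀ j, 1 ≤ k j) (hl1 : ∀ j, 1 ≤ l j) (hlk : ∀ j, l j ≤ k j)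
    (hktop : Filter.Tendsto k Filter.atTop Filter.atTop)
    (hratio : Filter.Tendsto (fun j => (l j : ℝ) / (k j : ℝ)) Filter.atTop (nhds 0)) :
    Filter.Tendsto
      (fun j => ((1 - ν / (k j : ℝ)) ^ (k j - l j) *
          (binH (star' ((1 - ν / (k j : ℝ)) ^ (l j)) ρ) - binH ρ))
        / (Real.exp (-ν) * ν * ((l j : ℝ) / (k j : ℝ)) * (1 - 2 * ρ) *
            Real.log ((1 - ρ) / ρ)))
      Filter.atTop (nhds 1) :=
  gtn_mutual_information_small_ratio_general ν ρ hν hρ0 hρ1 k l hl1 hlk hktop hratio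
end

section
/- For every real x, | H₂(Q(x)) − ( log 2 − x²/π ) | ≤ (4(π−1)/(3π²)) · x⁴. -/
/-- The standard Gaussian upper-tail function `Q(x) = ∫_x^∞ (1/√(2π)) e^{−t²/2} dt`. -/
noncomputable def gaussQ (x : ℝ) : ℝ :=
  ∫ t in Set.Ici x, (Real.sqrt (2 * Real.pi))⁻¹ * Real.exp (-t ^ 2 / 2)

/-!
Put `E = 1 - 2 Q(x)`. Then `H₂(Q(x)) = log 2 - D(E)` for `D = entropyDefect`, and since
`Q(-x) = 1 - Q(x)` we may take `x ≥ 0`, where `E = √(2/π) I` with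
`I = ∫₀ˣ e^{-t²/2} dt ∈ [x - x³/6, x]`.
As `D' = artanh` and `E ≤ artanh E ≤ E + 3E³/2` (the latter for `E² ≤ 7/9`), integration gives
`E²/2 ≤ D(E) ≤ E²/2 + 3E⁴/8`. The lower bound yields `x²/π - D(E) ≤ (x² - I²)/π ≤ x⁴/(3π)`;
the upper one yields `D(E) - x²/π ≤ 3x⁴/(2π²)` when `x² ≤ 6/5`, and for larger `x` the crude
`D(E) ≤ log 2` is enough. Both constants are at most `4(π - 1)/(3π²)`.
-/

open Real Set MeasureTheory ProbabilityTheory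

local notation "κ" => 4 * (π - 1) / (3 * π ^ 2)

noncomputable def entropyDefect (E : ℝ) : ℝ :=
  ((1 - E) * log (1 - E) + (1 + E) * log (1 + E)) / 2

lemma mul_log_two_mul (q : ℝ) : q * log (2 * q) = q * log 2 + q * log q := by
  rcases eq_or_ne q 0 with rfl | hq
  · simp
  · rw [log_mul two_ne_zero hq, mul_add]

lemma binH_eq_log_two_sub_entropyDefect (q : ℝ) :
    binH q = log 2 - entropyDefect (1 - 2 * q) := by
  have h₁ : 1 - (1 - 2 * q) = 2 * q := by ring
  have h₂ : 1 + (1 - 2 * q) = 2 * (1 - q) := by ring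
  rw [entropyDefect, h₁, h₂, mul_assoc, mul_assoc 2 (1 - q), mul_log_two_mul, mul_log_two_mul,
    binH]
  ring

lemma binH_one_sub (q : ℝ) : binH (1 - q) = binH q := by
  rw [binH, binH, sub_sub_cancel]
  ring

lemma binH_nonneg {q : ℝ} (h₀ : 0 ≤ q) (h₁ : q ≤ 1) : 0 ≤ binH q := by
  have := mul_log_nonpos h₀ h₁
  have := mul_log_nonpos (sub_nonneg.2 h₁) (sub_le_self 1 h₀)
  rw [binH]
  linarith

lemma entropyDefect_le_log_two {E : ℝ} (h₀ : -1 ≤ E) (h₁ : E ≤ 1) : entropyDefect E ≤ log 2 := by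
  have h := binH_eq_log_two_sub_entropyDefect ((1 - E) / 2)
  rw [show 1 - 2 * ((1 - E) / 2) = E by ring] at h
  linarith [binH_nonneg (q := (1 - E) / 2) (by linarith) (by linarith)]

lemma le_of_hasDerivAt_le {f g f' g' : ℝ → ℝ} {a b : ℝ} (hab : a ≤ b)
    (hf : ∀ t ∈ Icc a b, HasDerivAt f (f' t) t) (hg : ∀ t ∈ Icc a b, HasDerivAt g (g' t) t)
    (ha : f a ≤ g a) (hfg : ∀ t ∈ Ico a b, f' t ≤ g' t) : f b ≤ g b :=
  image_le_of_deriv_right_le_deriv_boundary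
    (fun t ht => (hf t ht).continuousAt.continuousWithinAt)
    (fun t ht => (hf t (Ico_subset_Icc_self ht)).hasDerivWithinAt) ha
    (fun t ht => (hg t ht).continuousAt.continuousWithinAt)
    (fun t ht => (hg t (Ico_subset_Icc_self ht)).hasDerivWithinAt) hfg (right_mem_Icc.2 hab)

lemma hasDerivAt_log_one_add_sub_log_one_sub {t : ℝ} (h₀ : -1 < t) (h₁ : t < 1) :
    HasDerivAt (fun s => log (1 + s) - log (1 - s)) (2 / (1 - t ^ 2)) t := by
  have hadd := ((hasDerivAt_id t).const_add 1).log (by simp; linarith)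
  have hsub := ((hasDerivAt_id t).const_sub 1).log (by simp; linarith)
  refine (hadd.sub hsub).congr_deriv ?_
  have : 1 + t ≠ 0 := by linarith
  have : 1 - t ≠ 0 := by linarith
  have : 1 - t ^ 2 ≠ 0 := by nlinarith
  simp only [id]
  field_simp
  ring

lemma two_mul_le_log_one_add_sub_log_one_sub {t : ℝ} (h₀ : 0 ≤ t) (h₁ : t < 1) :
    2 * t ≤ log (1 + t) - log (1 - t) := by
  simpa using le_hasSum (hasSum_log_sub_log_of_abs_lt_one (abs_lt.2 ⟨by linarith, h₁⟩)) 0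
    fun k _ => by positivity

lemma log_one_add_sub_log_one_sub_le {t : ℝ} (h₀ : 0 ≤ t) (h₁ : t ^ 2 ≤ 7 / 9) :
    log (1 + t) - log (1 - t) ≤ 2 * t + 3 * t ^ 3 := by
  have hlt {s : ℝ} (hs : s ∈ Icc 0 t) : s ^ 2 ≤ 7 / 9 := by nlinarith [hs.1, hs.2]
  refine le_of_hasDerivAt_le (f' := fun s => 2 / (1 - s ^ 2)) (g' := fun s => 2 + 9 * s ^ 2) h₀
    (fun s hs => hasDerivAt_log_one_add_sub_log_one_sub (by linarith [hs.1])
      (by nlinarith [hlt hs]))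
    (fun s _ => (((hasDerivAt_id s).const_mul 2).add
      ((hasDerivAt_pow 3 s).const_mul 3)).congr_deriv (by simp; ring)) (by simp) ?_
  intro s hs
  have := hlt (Ico_subset_Icc_self hs)
  rw [div_le_iff₀ (by linarith)]
  nlinarith

lemma hasDerivAt_entropyDefect {E : ℝ} (h₀ : -1 < E) (h₁ : E < 1) :
    HasDerivAt entropyDefect ((log (1 + E) - log (1 - E)) / 2) E := by
  have hsub := (hasDerivAt_mul_log (by linarith : 1 - E ≠ 0)).comp E
    ((hasDerivAt_id E).const_sub 1)
  have hadd := (hasDerivAt_mul_log (by linarith : 1 + E ≠ 0)).comp E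
    ((hasDerivAt_id E).const_add 1)
  refine ((hsub.add hadd).div_const 2).congr_deriv ?_
  ring

lemma sq_div_two_le_entropyDefect {E : ℝ} (h₀ : 0 ≤ E) (h₁ : E < 1) :
    E ^ 2 / 2 ≤ entropyDefect E :=
  le_of_hasDerivAt_le (f := fun s => s ^ 2 / 2) (g := entropyDefect) (f' := fun s => s) h₀
    (fun s _ => ((hasDerivAt_pow 2 s).div_const 2).congr_deriv (by simp))
    (fun s hs => hasDerivAt_entropyDefect (by linarith [hs.1]) (by linarith [hs.2]))
    (by simp [entropyDefect])
    (fun s hs => by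
      linarith [two_mul_le_log_one_add_sub_log_one_sub hs.1 (hs.2.trans h₁)])

lemma entropyDefect_le_sq_div_two_add {E : ℝ} (h₀ : 0 ≤ E) (h₁ : E ^ 2 ≤ 7 / 9) :
    entropyDefect E ≤ E ^ 2 / 2 + 3 / 8 * E ^ 4 := by
  have hlt {s : ℝ} (hs : s ∈ Icc 0 E) : s ^ 2 ≤ 7 / 9 := by nlinarith [hs.1, hs.2]
  refine le_of_hasDerivAt_le (f := entropyDefect) (g := fun s => s ^ 2 / 2 + 3 / 8 * s ^ 4)
    (g' := fun s => s + 3 / 2 * s ^ 3) h₀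
    (fun s hs => hasDerivAt_entropyDefect (by linarith [hs.1]) (by nlinarith [hlt hs]))
    (fun s _ => (((hasDerivAt_pow 2 s).div_const 2).add
      ((hasDerivAt_pow 4 s).const_mul (3 / 8))).congr_deriv (by ring))
    (by simp [entropyDefect]) (fun s hs => ?_)
  linarith [log_one_add_sub_log_one_sub_le hs.1 (hlt (Ico_subset_Icc_self hs))]

local notation "φ" => gaussianPDFReal 0 1

lemma gaussianPDFReal_zero_one (t : ℝ) : φ t = (√(2 * π))⁻¹ * exp (-t ^ 2 / 2) := by
  simp [gaussianPDFReal]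

lemma gaussQ_eq_setIntegral (x : ℝ) : gaussQ x = ∫ t in Ici x, φ t := by
  simp_rw [gaussianPDFReal_zero_one, gaussQ]

lemma integral_Iic_add_gaussQ (x : ℝ) : (∫ t in Iic x, φ t) + gaussQ x = 1 := by
  rw [gaussQ_eq_setIntegral, integral_Ici_eq_integral_Ioi, intervalIntegral.integral_Iic_add_Ioi
    (integrable_gaussianPDFReal 0 1).integrableOn (integrable_gaussianPDFReal 0 1).integrableOn,
    integral_gaussianPDFReal_eq_one 0 one_ne_zero]

lemma gaussianPDFReal_zero_one_neg (t : ℝ) : φ (-t) = φ t := by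
  simp [gaussianPDFReal_zero_one]

lemma gaussQ_neg (x : ℝ) : gaussQ (-x) = 1 - gaussQ x := by
  have h := integral_comp_neg_Iic x φ
  simp only [gaussianPDFReal_zero_one_neg] at h
  rw [gaussQ_eq_setIntegral, integral_Ici_eq_integral_Ioi, ← h]
  linarith [integral_Iic_add_gaussQ x]

lemma gaussQ_pos (x : ℝ) : 0 < gaussQ x := by
  rw [gaussQ_eq_setIntegral, setIntegral_pos_iff_support_of_nonneg_ae
    (ae_of_all _ (gaussianPDFReal_nonneg 0 1)) (integrable_gaussianPDFReal 0 1).integrableOn,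
    Function.support_eq_univ fun t => (gaussianPDFReal_pos 0 1 t one_ne_zero).ne', univ_inter,
    Real.volume_Ici]
  exact ENNReal.zero_lt_top

lemma one_sub_two_mul_gaussQ (x : ℝ) :
    1 - 2 * gaussQ x = √(2 / π) * ∫ t in (0)..x, exp (-t ^ 2 / 2) := by
  have h := intervalIntegral.integral_Ici_sub_Ici' (a := 0) (b := x)
    (integrable_gaussianPDFReal 0 1).integrableOn (integrable_gaussianPDFReal 0 1).integrableOn
  have h0 : gaussQ 0 = 1 / 2 := by
    have := gaussQ_neg 0
    rw [neg_zero] at this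
    linarith
  rw [← gaussQ_eq_setIntegral, ← gaussQ_eq_setIntegral, h0] at h
  simp_rw [gaussianPDFReal_zero_one, intervalIntegral.integral_const_mul] at h
  rw [show 2 / π = 2 ^ 2 / (2 * π) by field_simp, sqrt_div' _ (by positivity),
    sqrt_sq zero_le_two, div_eq_mul_inv, mul_assoc, ← h]
  ring

lemma integral_exp_neg_sq_div_two_le {x : ℝ} (hx : 0 ≤ x) :
    ∫ t in (0)..x, exp (-t ^ 2 / 2) ≤ x := by
  have hle (t : ℝ) : exp (-t ^ 2 / 2) ≤ 1 := exp_le_one_iff.2 (by nlinarith [sq_nonneg t])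
  simpa using intervalIntegral.integral_mono_on (μ := volume) hx
    ((by fun_prop : Continuous fun t : ℝ => exp (-t ^ 2 / 2)).intervalIntegrable 0 x)
    intervalIntegrable_const fun t _ => hle t

lemma sub_cube_div_six_le_integral_exp_neg_sq_div_two {x : ℝ} (hx : 0 ≤ x) :
    x - x ^ 3 / 6 ≤ ∫ t in (0)..x, exp (-t ^ 2 / 2) := by
  have hpoly : ∫ t in (0)..x, (1 - t ^ 2 / 2) = x - x ^ 3 / 6 := by
    norm_num [intervalIntegral.integral_sub, intervalIntegral.integral_div, integral_pow]
    ring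
  rw [← hpoly]
  exact intervalIntegral.integral_mono_on hx
    ((by fun_prop : Continuous fun t : ℝ => 1 - t ^ 2 / 2).intervalIntegrable 0 x)
    ((by fun_prop : Continuous fun t : ℝ => exp (-t ^ 2 / 2)).intervalIntegrable 0 x)
    fun t _ => by linarith [add_one_le_exp (-t ^ 2 / 2)]

lemma sq_mul_sqrt_two_div_pi (I : ℝ) : (√(2 / π) * I) ^ 2 = 2 * I ^ 2 / π := by
  rw [mul_pow, sq_sqrt (by positivity)]
  ring

lemma sq_div_pi_sub_entropyDefect_le {x I : ℝ} (hI : 0 ≤ I) (hIx : I ≤ x)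
    (hxI : x - x ^ 3 / 6 ≤ I) (hE : √(2 / π) * I < 1) :
    x ^ 2 / π - entropyDefect (√(2 / π) * I) ≤ κ * x ^ 4 := by
  have hD := sq_div_two_le_entropyDefect (by positivity) hE
  rw [sq_mul_sqrt_two_div_pi, show 2 * I ^ 2 / π / 2 = I ^ 2 / π by ring] at hD
  -- `x² - I² = (x - I)(x + I) ≤ (x³/6)(2x)`
  have hsq : x ^ 2 - I ^ 2 ≤ x ^ 4 / 3 := by nlinarith
  have hκ : (3 * π)⁻¹ ≤ κ := by
    rw [inv_eq_one_div, div_le_div_iff₀ (by positivity) (by positivity)]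
    nlinarith [pi_gt_three]
  calc x ^ 2 / π - entropyDefect (√(2 / π) * I) ≤ (x ^ 2 - I ^ 2) / π := by
        rw [sub_div]; linarith
    _ ≤ x ^ 4 / 3 / π := by gcongr
    _ = (3 * π)⁻¹ * x ^ 4 := by ring
    _ ≤ κ * x ^ 4 := by gcongr

lemma log_two_sub_sq_div_pi_le {x : ℝ} (hx : 6 / 5 ≤ x ^ 2) : log 2 - x ^ 2 / π ≤ κ * x ^ 4 := by
  have hπ₀ := pi_gt_d2
  have hπ₁ := pi_lt_d2
  have hκ : 0.28 ≤ κ := by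
    rw [le_div_iff₀ (by positivity)]
    nlinarith
  have hx4 : 36 / 25 ≤ x ^ 4 := by nlinarith
  have hdiv : 0.38 ≤ x ^ 2 / π := by
    rw [le_div_iff₀ (by positivity)]
    nlinarith
  nlinarith [log_two_lt_d9]

lemma entropyDefect_sub_sq_div_pi_le {x I : ℝ} (hI : 0 ≤ I) (hIx : I ≤ x)
    (hE : √(2 / π) * I < 1) :
    entropyDefect (√(2 / π) * I) - x ^ 2 / π ≤ κ * x ^ 4 := by
  have hE₀ : 0 ≤ √(2 / π) * I := by positivity
  rcases le_or_gt (x ^ 2) (6 / 5) with hx | hx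
  · have hI2 : I ^ 2 ≤ x ^ 2 := pow_le_pow_left₀ hI hIx 2
    have hπ := pi_gt_d2
    have hE2 : (√(2 / π) * I) ^ 2 ≤ 7 / 9 := by
      rw [sq_mul_sqrt_two_div_pi, div_le_iff₀ (by positivity)]
      nlinarith
    have hD := entropyDefect_le_sq_div_two_add hE₀ hE2
    rw [show (√(2 / π) * I) ^ 4 = ((√(2 / π) * I) ^ 2) ^ 2 by ring, sq_mul_sqrt_two_div_pi,
      show 2 * I ^ 2 / π / 2 + 3 / 8 * (2 * I ^ 2 / π) ^ 2 = I ^ 2 / π + 3 / (2 * π ^ 2) * I ^ 4 by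
        field_simp; ring] at hD
    have hκ : 3 / (2 * π ^ 2) ≤ κ := by
      rw [div_le_div_iff₀ (by positivity) (by positivity)]
      nlinarith
    calc entropyDefect (√(2 / π) * I) - x ^ 2 / π
        ≤ (I ^ 2 - x ^ 2) / π + 3 / (2 * π ^ 2) * I ^ 4 := by rw [sub_div]; linarith
      _ ≤ 0 + 3 / (2 * π ^ 2) * x ^ 4 := by
          gcongr
          · exact div_nonpos_of_nonpos_of_nonneg (by linarith) pi_pos.le
      _ ≤ κ * x ^ 4 := by rw [zero_add]; gcongr
  · linarith [entropyDefect_le_log_two (by linarith) hE.le, log_two_sub_sq_div_pi_le hx.le]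

theorem entropy_Q_taylor_bound (x : ℝ) :
    |binH (gaussQ x) - (Real.log 2 - x ^ 2 / Real.pi)|
      ≤ 4 * (Real.pi - 1) / (3 * Real.pi ^ 2) * x ^ 4 := by
  wlog hx : 0 ≤ x generalizing x
  · have h := this (-x) (by linarith)
    rwa [gaussQ_neg, binH_one_sub, even_two.neg_pow, (by decide : Even 4).neg_pow] at h
  set I := ∫ t in (0)..x, exp (-t ^ 2 / 2)
  have hE : 1 - 2 * gaussQ x = √(2 / π) * I := one_sub_two_mul_gaussQ x
  have hI : 0 ≤ I := intervalIntegral.integral_nonneg hx fun t _ => (exp_pos _).le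
  have hE₁ : √(2 / π) * I < 1 := by linarith [gaussQ_pos x]
  have hIx := integral_exp_neg_sq_div_two_le hx
  rw [binH_eq_log_two_sub_entropyDefect, hE, abs_le]
  constructor
  · linarith [entropyDefect_sub_sq_div_pi_le hI hIx hE₁]
  · linarith [sq_div_pi_sub_entropyDefect_le hI hIx
      (sub_cube_div_six_le_integral_exp_neg_sq_div_two hx) hE₁]
end
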